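/- (Corollary: trapped surfaces from concentration of charge.) Let l₀ > 0 and Q ≠ 0 a real constant. Let r : [0,∞) → ℝ be twice differentiable with r(0) = 0, continuous first derivative, r'(0) = 1 and r(l) > 0 for all l > 0; let K_r : [0,∞) → ℝ be differentiable and continuous at 0, and K_l, μ, j : (0,∞) → ℝ, such that the Hamiltonian constraint K_r(K_r + 2K_l) − (r'² + 2 r r'' − 1)/r² = 8π μ and the momentum constraint K_r' + (r'/r)(K_r − K_l) = 4π j hold on (0,∞). Assume the dominant energy condition μ ≥ |j| on (0,l₀], electrovacuum exterior μ = Q²/(8π r⁴) and j = 0 on [l₀,∞), and asymptotic flatness lim_{l→∞} r(l) = ∞, lim_{l→∞} r'(l) = 1, lim_{l→∞} r(l)K_r(l) = 0. If 2 r(l₀) ≤ |Q|, then there exists l ≥ l₀ with f(l) = r'(l)² − (K_r(l) r(l))² ≤ 0; that is, there is a (marginally) trapped surface enclosing the ball 𝓑. -/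

import Mathlib

open Set Filter Topology Real

/-!
The Misner–Sharp mass `m = r (1 - f) / 2` obeys `m' = 4π r² (μ r' + j r K_r)` by the two
constraints. Suppose no sphere outside the ball is trapped. Then `r'(l₀) > 0`, since `r' → 1`
and `r'` cannot vanish where `f > 0`. Starting from the regular centre, `m(0) = 0`, a barrier
argument gives `m(l₀) ≥ 0`: wherever `m < 0` all the way up to `l₀` we have `f > 1`, so `r'` keeps
the sign it has at `l₀`, hence `r' > |r K_r|`, and the dominant energy condition makes `m' ≥ 0`.
In the electrovacuum exterior `E = m + Q² / (2r)` is conserved (Reissner–Nordström), so that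
`f = 1 - 2E/r + Q²/r²`. As `E ≥ Q² / (2 r(l₀)) ≥ |Q|`, at the sphere where `r = E`, which exists
because `r → ∞`, we get `f = Q²/E² - 1 ≤ 0`: a contradiction.
-/

theorem IsPreconnected.pos_of_ne_zero {X α : Type*} [TopologicalSpace X] [LinearOrder α]
    [TopologicalSpace α] [OrderClosedTopology α] [Zero α] {s : Set X} (hs : IsPreconnected s)
    {g : X → α} (hg : ContinuousOn g s) (hne : ∀ x ∈ s, g x ≠ 0) {x₀ : X} (hx₀ : x₀ ∈ s)
    (hpos : 0 < g x₀) {x : X} (hx : x ∈ s) : 0 < g x := by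
  by_contra! hle
  obtain ⟨y, hy, hy0⟩ := hs.intermediate_value hx hx₀ hg ⟨hle, hpos.le⟩
  exact hne y hy hy0

theorem le_of_hasDerivAt_nonneg_of_lt {g g' : ℝ → ℝ} {a b c : ℝ} (hab : a ≤ b)
    (hg : ContinuousOn g (Icc a b)) (hg' : ∀ x ∈ Ioo a b, HasDerivAt g (g' x) x)
    (ha : c ≤ g a) (hnonneg : ∀ x ∈ Ioo a b, (∀ y ∈ Icc x b, g y < c) → 0 ≤ g' x) :
    c ≤ g b := by
  by_contra! hb
  set t := sSup (Icc a b ∩ g ⁻¹' Ici c)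
  have hbdd : BddAbove (Icc a b ∩ g ⁻¹' Ici c) := bddAbove_Icc.mono inter_subset_left
  have ht : t ∈ Icc a b ∩ g ⁻¹' Ici c :=
    (hg.preimage_isClosed_of_isClosed isClosed_Icc isClosed_Ici).csSup_mem
      ⟨a, left_mem_Icc.2 hab, ha⟩ hbdd
  have hlt : ∀ y ∈ Ioc t b, g y < c := fun y hy =>
    not_le.1 fun hy' => (le_csSup hbdd ⟨⟨ht.1.1.trans hy.1.le, hy.2⟩, hy'⟩).not_gt hy.1
  have hmono : MonotoneOn g (Icc t b) := by
    refine monotoneOn_of_hasDerivWithinAt_nonneg (f' := g') (convex_Icc t b)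
      (hg.mono (Icc_subset_Icc_left ht.1.1)) (fun x hx => ?_) (fun x hx => ?_)
    all_goals rw [interior_Icc] at hx
    · exact (hg' x ⟨ht.1.1.trans_lt hx.1, hx.2⟩).hasDerivWithinAt
    · exact hnonneg x ⟨ht.1.1.trans_lt hx.1, hx.2⟩ fun y hy => hlt y ⟨hx.1.trans_le hy.1, hy.2⟩
  have htb : t ≤ b := ht.1.2
  linarith [hmono (left_mem_Icc.2 htb) (right_mem_Icc.2 htb) htb, show c ≤ g t from ht.2]

theorem mul_add_mul_nonneg_of_abs_le {μ j a b : ℝ} (hj : |j| ≤ μ) (hb : |b| ≤ a) :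
    0 ≤ μ * a + j * b := by
  have : |j * b| ≤ μ * a := by
    rw [abs_mul]; exact mul_le_mul hj hb (abs_nonneg b) ((abs_nonneg j).trans hj)
  linarith [neg_abs_le (j * b)]

def trappingFunction (r r' Kr : ℝ → ℝ) (l : ℝ) : ℝ := r' l ^ 2 - (Kr l * r l) ^ 2

noncomputable def misnerSharpMass (r r' Kr : ℝ → ℝ) (l : ℝ) : ℝ :=
  r l / 2 * (1 - trappingFunction r r' Kr l)

section

variable {r r' r'' Kr Kr' Kl μ j : ℝ → ℝ}

theorem ne_zero_of_trappingFunction_pos {l : ℝ} (hf : 0 < trappingFunction r r' Kr l) :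
    r' l ≠ 0 := by
  intro h
  simp only [trappingFunction, h] at hf
  nlinarith [sq_nonneg (Kr l * r l)]

theorem hasDerivAt_misnerSharpMass {l : ℝ} (hr : r l ≠ 0)
    (hr' : HasDerivAt r (r' l) l) (hr'' : HasDerivAt r' (r'' l) l) (hKr : HasDerivAt Kr (Kr' l) l)
    (hham : Kr l * (Kr l + 2 * Kl l) - (r' l ^ 2 + 2 * r l * r'' l - 1) / r l ^ 2 = 8 * π * μ l)
    (hmom : Kr' l + r' l / r l * (Kr l - Kl l) = 4 * π * j l) :
    HasDerivAt (misnerSharpMass r r' Kr)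
      (4 * π * r l ^ 2 * (μ l * r' l + j l * (r l * Kr l))) l := by
  have h := (hr'.div_const (2 : ℝ)).fun_mul
    (((hr''.fun_pow 2).fun_sub ((hKr.fun_mul hr').fun_pow 2)).const_sub 1)
  refine h.congr_deriv ?_
  field_simp at hham hmom
  simp only [Nat.cast_ofNat, Nat.add_one_sub_one, pow_one]
  linear_combination (r' l / 2) * hham + (r l ^ 2 * Kr l) * hmom

theorem misnerSharpMass_nonneg {l₀ : ℝ} (hl₀ : 0 ≤ l₀) (hr0 : r 0 = 0)
    (hrpos : ∀ l ∈ Ioc 0 l₀, 0 < r l) (hr : ContinuousOn r (Icc 0 l₀))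
    (hr' : ContinuousOn r' (Icc 0 l₀)) (hKr : ContinuousOn Kr (Icc 0 l₀))
    (hm : ∀ l ∈ Ioo 0 l₀, HasDerivAt (misnerSharpMass r r' Kr)
      (4 * π * r l ^ 2 * (μ l * r' l + j l * (r l * Kr l))) l)
    (hDEC : ∀ l ∈ Ioo 0 l₀, |j l| ≤ μ l) (hr'l₀ : 0 < r' l₀) :
    0 ≤ misnerSharpMass r r' Kr l₀ := by
  refine le_of_hasDerivAt_nonneg_of_lt hl₀
    ((hr.div_const 2).mul (continuousOn_const.sub ((hr'.pow 2).sub ((hKr.mul hr).pow 2)))) hm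
    (by simp [misnerSharpMass, hr0]) fun x hx hneg => ?_
  have huntrapped : ∀ y ∈ Icc x l₀, 0 < trappingFunction r r' Kr y := fun y hy => by
    have := neg_of_mul_neg_right (hneg y hy)
      (half_pos (hrpos y ⟨hx.1.trans_le hy.1, hy.2⟩)).le
    linarith
  have hr'x : 0 < r' x := isPreconnected_Icc.pos_of_ne_zero (hr'.mono (Icc_subset_Icc_left hx.1.le))
    (fun y hy => ne_zero_of_trappingFunction_pos (huntrapped y hy)) (right_mem_Icc.2 hx.2.le)
    hr'l₀ (left_mem_Icc.2 hx.2.le)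
  have hKrx : |r x * Kr x| ≤ r' x := by
    have := huntrapped x (left_mem_Icc.2 hx.2.le)
    rw [trappingFunction, sub_pos, sq_lt_sq, abs_of_pos hr'x, mul_comm] at this
    exact this.le
  have := mul_add_mul_nonneg_of_abs_le (hDEC x hx) hKrx
  positivity

theorem misnerSharpMass_add_eq_of_electrovacuum {l₀ Q : ℝ} (hrpos : ∀ l ∈ Ici l₀, 0 < r l)
    (hr : ∀ l ∈ Ici l₀, HasDerivAt r (r' l) l)
    (hm : ∀ l ∈ Ici l₀, HasDerivAt (misnerSharpMass r r' Kr)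
      (4 * π * r l ^ 2 * (μ l * r' l + j l * (r l * Kr l))) l)
    (hEVμ : ∀ l ∈ Ici l₀, μ l = Q ^ 2 / (8 * π * r l ^ 4)) (hEVj : ∀ l ∈ Ici l₀, j l = 0)
    {l : ℝ} (hl : l₀ ≤ l) :
    misnerSharpMass r r' Kr l + Q ^ 2 / (2 * r l) =
      misnerSharpMass r r' Kr l₀ + Q ^ 2 / (2 * r l₀) := by
  have hconst : ∀ x ∈ Ici l₀,
      HasDerivAt (fun x => misnerSharpMass r r' Kr x + Q ^ 2 / (2 * r x)) 0 x := fun x hx => by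
    have hrx := (hrpos x hx).ne'
    refine ((hm x hx).add ((hasDerivAt_const x (Q ^ 2)).div ((hr x hx).const_mul 2)
      (by positivity))).congr_deriv ?_
    rw [hEVμ x hx, hEVj x hx]
    field_simp
    ring
  exact constant_of_has_deriv_right_zero
    (fun x hx => (hconst x hx.1).continuousAt.continuousWithinAt)
    (fun x hx => (hconst x hx.1).hasDerivWithinAt) l ⟨hl, le_rfl⟩

theorem exists_trappingFunction_nonpos_of_electrovacuum {l₀ Q : ℝ}
    (hrpos : ∀ l ∈ Ici l₀, 0 < r l) (hr : ∀ l ∈ Ici l₀, HasDerivAt r (r' l) l)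
    (hm : ∀ l ∈ Ici l₀, HasDerivAt (misnerSharpMass r r' Kr)
      (4 * π * r l ^ 2 * (μ l * r' l + j l * (r l * Kr l))) l)
    (hEVμ : ∀ l ∈ Ici l₀, μ l = Q ^ 2 / (8 * π * r l ^ 4)) (hEVj : ∀ l ∈ Ici l₀, j l = 0)
    (hrlim : Tendsto r atTop atTop) (hm₀ : 0 ≤ misnerSharpMass r r' Kr l₀)
    (hsize : 2 * r l₀ ≤ |Q|) :
    ∃ l, l₀ ≤ l ∧ trappingFunction r r' Kr l ≤ 0 := by
  set E := misnerSharpMass r r' Kr l₀ + Q ^ 2 / (2 * r l₀)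
  have hr₀ := hrpos l₀ self_mem_Ici
  have hQE : |Q| ≤ E := by
    have : |Q| ≤ Q ^ 2 / (2 * r l₀) := by
      rw [le_div_iff₀ (by positivity), ← sq_abs]
      nlinarith [abs_nonneg Q]
    linarith
  obtain ⟨l, hl, hrl⟩ := intermediate_value_Ici
    (fun x hx => (hr x hx).continuousAt.continuousWithinAt) hrlim
    (show r l₀ ≤ E by linarith [abs_nonneg Q])
  refine ⟨l, hl, ?_⟩
  have hcons : misnerSharpMass r r' Kr l + Q ^ 2 / (2 * r l) = E :=
    misnerSharpMass_add_eq_of_electrovacuum hrpos hr hm hEVμ hEVj hl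
  have hE : 0 < E := hrl ▸ hrpos l hl
  clear_value E
  rw [misnerSharpMass, hrl] at hcons
  have hf : trappingFunction r r' Kr l * E ^ 2 = Q ^ 2 - E ^ 2 := by
    field_simp at hcons
    linear_combination -hcons
  have hQ2 : Q ^ 2 ≤ E ^ 2 := sq_abs Q ▸ pow_le_pow_left₀ (abs_nonneg Q) hQE 2
  nlinarith [pow_pos hE 2]

end

theorem trapped_surfaces_from_charge_concentration_general
    (l₀ : ℝ) (hl₀ : 0 < l₀) (Q : ℝ)
    (r r' r'' Kr Kr' Kl μ j : ℝ → ℝ)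
    (hr0 : r 0 = 0)
    (hrpos : ∀ l ∈ Ioi (0 : ℝ), 0 < r l)
    (hr' : ∀ l ∈ Ici (0 : ℝ), HasDerivWithinAt r (r' l) (Ici 0) l)
    (hr'cont : ContinuousOn r' (Ici 0))
    (hr'' : ∀ l ∈ Ioi (0 : ℝ), HasDerivWithinAt r' (r'' l) (Ici 0) l)
    (hKr' : ∀ l ∈ Ioi (0 : ℝ), HasDerivWithinAt Kr (Kr' l) (Ici 0) l)
    (hKrcont0 : ContinuousWithinAt Kr (Ici 0) 0)
    (hham : ∀ l ∈ Ioi (0 : ℝ), Kr l * (Kr l + 2 * Kl l)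
      - ((r' l) ^ 2 + 2 * r l * r'' l - 1) / (r l) ^ 2 = 8 * Real.pi * μ l)
    (hmom : ∀ l ∈ Ioi (0 : ℝ),
      Kr' l + (r' l / r l) * (Kr l - Kl l) = 4 * Real.pi * j l)
    (hDEC : ∀ l ∈ Ioc 0 l₀, |j l| ≤ μ l)
    (hEVμ : ∀ l ∈ Ici l₀, μ l = Q ^ 2 / (8 * Real.pi * (r l) ^ 4))
    (hEVj : ∀ l ∈ Ici l₀, j l = 0)
    (hrlim : Tendsto r atTop atTop)
    (hr'lim : Tendsto r' atTop (𝓝 1))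
    (hsize : 2 * r l₀ ≤ |Q|) :
    ∃ l, l₀ ≤ l ∧ (r' l) ^ 2 - (Kr l * r l) ^ 2 ≤ 0 := by
  have hrc : ContinuousOn r (Ici 0) := fun l hl => (hr' l hl).continuousWithinAt
  have hKrc : ContinuousOn Kr (Ici 0) := by
    intro l hl
    rcases (mem_Ici.1 hl).eq_or_lt with rfl | hl
    exacts [hKrcont0, (hKr' l hl).continuousWithinAt]
  have hr : ∀ l ∈ Ioi (0 : ℝ), HasDerivAt r (r' l) l := fun l hl =>
    (hr' l (mem_Ici.2 (le_of_lt hl))).hasDerivAt (Ici_mem_nhds hl)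
  have hm : ∀ l ∈ Ioi (0 : ℝ), HasDerivAt (misnerSharpMass r r' Kr)
      (4 * π * r l ^ 2 * (μ l * r' l + j l * (r l * Kr l))) l := fun l hl =>
    hasDerivAt_misnerSharpMass (hrpos l hl).ne' (hr l hl) ((hr'' l hl).hasDerivAt (Ici_mem_nhds hl))
      ((hKr' l hl).hasDerivAt (Ici_mem_nhds hl)) (hham l hl) (hmom l hl)
  by_contra! huntrapped
  obtain ⟨b, hb, hr'b⟩ :=
    ((eventually_ge_atTop l₀).and (hr'lim.eventually (eventually_gt_nhds one_pos))).exists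
  have hr'l₀ : 0 < r' l₀ := isPreconnected_Ici.pos_of_ne_zero
    (hr'cont.mono (Ici_subset_Ici.2 hl₀.le))
    (fun l hl => ne_zero_of_trappingFunction_pos (huntrapped l hl)) hb hr'b self_mem_Ici
  have hm₀ : 0 ≤ misnerSharpMass r r' Kr l₀ := misnerSharpMass_nonneg hl₀.le hr0
    (fun l hl => hrpos l hl.1) (hrc.mono Icc_subset_Ici_self)
    (hr'cont.mono Icc_subset_Ici_self) (hKrc.mono Icc_subset_Ici_self) (fun l hl => hm l hl.1)
    (fun l hl => hDEC l (Ioo_subset_Ioc_self hl)) hr'l₀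
  obtain ⟨l, hl, hf⟩ := exists_trappingFunction_nonpos_of_electrovacuum
    (fun l hl => hrpos l (hl₀.trans_le hl)) (fun l hl => hr l (hl₀.trans_le hl))
    (fun l hl => hm l (hl₀.trans_le hl)) hEVμ hEVj hrlim hm₀ hsize
  exact (huntrapped l hl).not_ge hf

/-- Corollary: trapped surfaces from concentration of charge:
for regular spherically symmetric, asymptotically flat initial data whose
exterior region `[l₀,∞)` is electrovacuum with total charge `Q ≠ 0` and whose
ball `(0,l₀]` satisfies the dominant energy condition, if `2 r(l₀) ≤ |Q|`
then there is a (marginally) trapped surface enclosing the ball: some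
`l ≥ l₀` with `f(l) = r'² − (K_r r)² ≤ 0`. -/
theorem trapped_surfaces_from_charge_concentration
    (l₀ : ℝ) (hl₀ : 0 < l₀) (Q : ℝ) (hQ : Q ≠ 0)
    (r r' r'' Kr Kr' Kl μ j : ℝ → ℝ)
    (hr0 : r 0 = 0) (hr'0 : r' 0 = 1)
    (hrpos : ∀ l ∈ Ioi (0 : ℝ), 0 < r l)
    (hr' : ∀ l ∈ Ici (0 : ℝ), HasDerivWithinAt r (r' l) (Ici 0) l)
    (hr'cont : ContinuousOn r' (Ici 0))
    (hr'' : ∀ l ∈ Ioi (0 : ℝ), HasDerivWithinAt r' (r'' l) (Ici 0) l)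
    (hKr' : ∀ l ∈ Ioi (0 : ℝ), HasDerivWithinAt Kr (Kr' l) (Ici 0) l)
    (hKrcont0 : ContinuousWithinAt Kr (Ici 0) 0)
    (hham : ∀ l ∈ Ioi (0 : ℝ), Kr l * (Kr l + 2 * Kl l)
      - ((r' l) ^ 2 + 2 * r l * r'' l - 1) / (r l) ^ 2 = 8 * Real.pi * μ l)
    (hmom : ∀ l ∈ Ioi (0 : ℝ),
      Kr' l + (r' l / r l) * (Kr l - Kl l) = 4 * Real.pi * j l)
    (hDEC : ∀ l ∈ Ioc 0 l₀, |j l| ≤ μ l)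
    (hEVμ : ∀ l ∈ Ici l₀, μ l = Q ^ 2 / (8 * Real.pi * (r l) ^ 4))
    (hEVj : ∀ l ∈ Ici l₀, j l = 0)
    (hrlim : Tendsto r atTop atTop)
    (hr'lim : Tendsto r' atTop (𝓝 1))
    (hrKrlim : Tendsto (fun l => r l * Kr l) atTop (𝓝 0))
    (hsize : 2 * r l₀ ≤ |Q|) :
    ∃ l, l₀ ≤ l ∧ (r' l) ^ 2 - (Kr l * r l) ^ 2 ≤ 0 :=
  trapped_surfaces_from_charge_concentration_general l₀ hl₀ Q r r' r'' Kr Kr' Kl μ j hr0 hrpos hr'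
    hr'cont hr'' hKr' hKrcont0 hham hmom hDEC hEVμ hEVj hrlim hr'lim hsize
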